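/- For every h₁ > 0 there exists δ > 0, depending only on h₁ (one may take δ = tanh(4h₁/5)/4), such that for all real h ≥ h₁, all m ∈ ℝ with |m| ≥ 1/2, and all ξ ≥ 4/5, the derivative with respect to ξ of the dispersion symbol ξ ↦ m·(ξ·tanh(h·ξ))^{1/2} satisfies | d/dξ ( m·(ξ·tanh(h·ξ))^{1/2} ) | ≥ δ·ξ^{−1/2}. -/

import Mathlib

/-!
Write `g(ξ) = ξ tanh(hξ)`. Then `g'(ξ) = tanh(hξ) + hξ / cosh²(hξ) ≥ tanh(hξ)` and `g(ξ) ≤ ξ`, so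
`|d/dξ (m √g)| = |m| g' / (2√g) ≥ |m| tanh(hξ) / (2√ξ)`. Since `tanh` is increasing and
`hξ ≥ 4h₁/5`, this is at least `tanh(4h₁/5) / (4√ξ)`.
-/

open Real

namespace Real

theorem tanh_strictMono : StrictMono tanh := by
  intro x y hxy
  by_contra! hyx
  have := artanh_le_artanh (neg_one_lt_tanh y) (tanh_lt_one x) hyx
  rw [artanh_tanh, artanh_tanh] at this
  linarith

theorem tanh_pos {x : ℝ} (hx : 0 < x) : 0 < tanh x := by
  simpa using tanh_strictMono hx

theorem hasDerivAt_tanh (x : ℝ) : HasDerivAt tanh (cosh x ^ 2)⁻¹ x := by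
  have hquot := (hasDerivAt_sinh x).div (hasDerivAt_cosh x) (cosh_pos x).ne'
  have hderiv : (cosh x * cosh x - sinh x * sinh x) / cosh x ^ 2 = (cosh x ^ 2)⁻¹ := by
    rw [← sq, ← sq, cosh_sq_sub_sinh_sq, one_div]
  rwa [hderiv, ← show tanh = sinh / cosh from funext tanh_eq_sinh_div_cosh] at hquot

end Real

theorem hasDerivAt_mul_tanh_const_mul (h x : ℝ) :
    HasDerivAt (fun s ↦ s * tanh (h * s)) (tanh (h * x) + x * (h / cosh (h * x) ^ 2)) x := by
  have htanh : HasDerivAt (fun s ↦ tanh (h * s)) (h / cosh (h * x) ^ 2) x := by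
    have := (hasDerivAt_tanh (h * x)).comp x ((hasDerivAt_id' x).const_mul h)
    rwa [mul_one, inv_mul_eq_div] at this
  simpa using (hasDerivAt_id' x).fun_mul htanh

theorem mul_div_two_sqrt_le_abs_deriv_sqrt_mul_tanh {h ξ : ℝ} (hh : 0 < h) (hξ : 0 < ξ)
    (m : ℝ) :
    |m| * (tanh (h * ξ) / (2 * √ξ)) ≤ |deriv (fun s ↦ m * √(s * tanh (h * s))) ξ| := by
  set g' := tanh (h * ξ) + ξ * (h / cosh (h * ξ) ^ 2)
  have htanh_pos : 0 < tanh (h * ξ) := tanh_pos (mul_pos hh hξ)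
  have hg_pos : 0 < ξ * tanh (h * ξ) := mul_pos hξ htanh_pos
  have hderiv : HasDerivAt (fun s ↦ m * √(s * tanh (h * s)))
      (m * (g' / (2 * √(ξ * tanh (h * ξ))))) ξ :=
    ((hasDerivAt_mul_tanh_const_mul h ξ).sqrt hg_pos.ne').const_mul m
  have htanh_le_g' : tanh (h * ξ) ≤ g' := le_add_of_nonneg_right (by positivity)
  have hsqrt_g_le : √(ξ * tanh (h * ξ)) ≤ √ξ :=
    sqrt_le_sqrt (mul_le_of_le_one_right hξ.le (tanh_lt_one _).le)
  rw [hderiv.deriv, abs_mul, abs_of_pos (by positivity : 0 < g' / (2 * √(ξ * tanh (h * ξ))))]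
  gcongr

/-- Lower bound for the ξ-derivative of the dispersion symbol: there is δ > 0, depending
only on h₁, such that for all h ≥ h₁, |m| ≥ 1/2 and ξ ≥ 4/5,
|d/dξ (m (ξ tanh(h ξ))^{1/2})| ≥ δ ξ^{−1/2}. -/
theorem dispersion_symbol_derivative_lower_bound (h₁ : ℝ) (hh₁ : 0 < h₁) :
    ∃ δ : ℝ, 0 < δ ∧ ∀ h : ℝ, h₁ ≤ h → ∀ m : ℝ, 1 / 2 ≤ |m| → ∀ ξ : ℝ, 4 / 5 ≤ ξ →
      δ * ξ ^ (-(1 / 2) : ℝ) ≤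
        |deriv (fun s : ℝ => m * Real.sqrt (s * Real.tanh (h * s))) ξ| := by
  have htanh_pos : 0 < tanh (4 * h₁ / 5) := tanh_pos (by positivity)
  refine ⟨tanh (4 * h₁ / 5) / 4, by positivity, fun h hh m hm ξ hξ ↦ ?_⟩
  have hξ_pos : 0 < ξ := by linarith
  have htanh_le : tanh (4 * h₁ / 5) ≤ tanh (h * ξ) :=
    tanh_strictMono.monotone (by nlinarith)
  calc tanh (4 * h₁ / 5) / 4 * ξ ^ (-(1 / 2) : ℝ)
      = 1 / 2 * (tanh (4 * h₁ / 5) / (2 * √ξ)) := by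
        rw [rpow_neg hξ_pos.le, ← sqrt_eq_rpow]
        ring
    _ ≤ |m| * (tanh (h * ξ) / (2 * √ξ)) := by gcongr
    _ ≤ _ := mul_div_two_sqrt_le_abs_deriv_sqrt_mul_tanh (hh₁.trans_le hh) hξ_pos m
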